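/- Every instance of SPA-ST admits a weakly stable matching. -/

import Mathlib

open scoped Classical

/-- An instance of the Student-Project Allocation problem with lecturer
preferences over students, with Ties (SPA-ST).  `sPref s p q` means student `s`
ranks project `p` at least as highly as project `q` (`p ⪰_s q`); `lPref k t t'`
means lecturer `k` ranks student `t` at least as highly as student `t'`. -/
structure SPAST (S P L : Type) [Fintype S] [Fintype P] [Fintype L]
    [DecidableEq S] [DecidableEq P] [DecidableEq L] where
  /-- the lecturer offering each project -/
  lec : P → L
  /-- project capacities -/
  c : P → ℕ
  /-- lecturer capacities -/
  d : L → ℕ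
  cpos : ∀ p : P, 0 < c p
  dpos : ∀ k : L, 0 < d k
  /-- the set of projects acceptable to each student -/
  acc : S → Finset P
  sPref : S → P → P → Prop
  lPref : L → S → S → Prop
  sRefl : ∀ s : S, ∀ p ∈ acc s, sPref s p p
  sTrans : ∀ s : S, ∀ p ∈ acc s, ∀ q ∈ acc s, ∀ r ∈ acc s,
    sPref s p q → sPref s q r → sPref s p r
  sTotal : ∀ s : S, ∀ p ∈ acc s, ∀ q ∈ acc s, sPref s p q ∨ sPref s q p
  lRefl : ∀ k : L, ∀ t : S, (∃ p ∈ acc t, lec p = k) → lPref k t t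
  lTrans : ∀ k : L, ∀ t1 t2 t3 : S,
    (∃ p ∈ acc t1, lec p = k) → (∃ p ∈ acc t2, lec p = k) → (∃ p ∈ acc t3, lec p = k) →
    lPref k t1 t2 → lPref k t2 t3 → lPref k t1 t3
  lTotal : ∀ k : L, ∀ t1 t2 : S,
    (∃ p ∈ acc t1, lec p = k) → (∃ p ∈ acc t2, lec p = k) →
    lPref k t1 t2 ∨ lPref k t2 t1
  capLB : ∀ p : P, c p ≤ d (lec p)
  capUB : ∀ k : L, d k ≤ ∑ p ∈ Finset.univ.filter (fun p => lec p = k), c p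

namespace SPAST

variable {S P L : Type} [Fintype S] [Fintype P] [Fintype L]
  [DecidableEq S] [DecidableEq P] [DecidableEq L]

/-- `M` is a matching: pairs are acceptable, each student is matched at most once,
and project and lecturer capacities are respected. -/
def IsMatching (I : SPAST S P L) (M : Finset (S × P)) : Prop :=
  (∀ x ∈ M, x.2 ∈ I.acc x.1) ∧
  (∀ s : S, ∀ p q : P, (s, p) ∈ M → (s, q) ∈ M → p = q) ∧
  (∀ p : P, (M.filter (fun x => x.2 = p)).card ≤ I.c p) ∧
  (∀ k : L, (M.filter (fun x => I.lec x.2 = k)).card ≤ I.d k)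

/-- The set `M(p)` of students assigned to project `p` in `M`. -/
def projAsg (M : Finset (S × P)) (p : P) : Finset S :=
  (M.filter (fun x => x.2 = p)).image Prod.fst

/-- The set `M(l_k)` of students assigned to lecturer `k` in `M`. -/
def lecAsg (I : SPAST S P L) (M : Finset (S × P)) (k : L) : Finset S :=
  (M.filter (fun x => I.lec x.2 = k)).image Prod.fst

/-- `t` is a least-preferred (worst) student of lecturer `k` in the set `T`. -/
def WorstIn (I : SPAST S P L) (k : L) (T : Finset S) (t : S) : Prop :=
  t ∈ T ∧ ∀ t' ∈ T, I.lPref k t' t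

/-- `(s, p)` is a super-blocking pair for `M`. -/
def SuperBlocking (I : SPAST S P L) (M : Finset (S × P)) (s : S) (p : P) : Prop :=
  p ∈ I.acc s ∧ (s, p) ∉ M ∧
  (∀ q : P, (s, q) ∈ M → ¬(I.sPref s q p ∧ ¬I.sPref s p q)) ∧
  (((projAsg M p).card < I.c p ∧ (lecAsg I M (I.lec p)).card < I.d (I.lec p)) ∨
   ((projAsg M p).card < I.c p ∧ (lecAsg I M (I.lec p)).card = I.d (I.lec p) ∧
     (s ∈ lecAsg I M (I.lec p) ∨
      ∃ t : S, WorstIn I (I.lec p) (lecAsg I M (I.lec p)) t ∧ I.lPref (I.lec p) s t)) ∨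
   ((projAsg M p).card = I.c p ∧
     ∃ t : S, WorstIn I (I.lec p) (projAsg M p) t ∧ I.lPref (I.lec p) s t))

/-- `(s, p)` is a weakly-blocking pair for `M`. -/
def WeakBlocking (I : SPAST S P L) (M : Finset (S × P)) (s : S) (p : P) : Prop :=
  p ∈ I.acc s ∧ (s, p) ∉ M ∧
  (∀ q : P, (s, q) ∈ M → I.sPref s p q ∧ ¬I.sPref s q p) ∧
  (((projAsg M p).card < I.c p ∧ (lecAsg I M (I.lec p)).card < I.d (I.lec p)) ∨
   ((projAsg M p).card < I.c p ∧ (lecAsg I M (I.lec p)).card = I.d (I.lec p) ∧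
     (s ∈ lecAsg I M (I.lec p) ∨
      ∃ t : S, WorstIn I (I.lec p) (lecAsg I M (I.lec p)) t ∧
        (I.lPref (I.lec p) s t ∧ ¬I.lPref (I.lec p) t s))) ∨
   ((projAsg M p).card = I.c p ∧
     ∃ t : S, WorstIn I (I.lec p) (projAsg M p) t ∧
       (I.lPref (I.lec p) s t ∧ ¬I.lPref (I.lec p) t s)))

/-- `M` is a super-stable matching in `I`. -/
def SuperStable (I : SPAST S P L) (M : Finset (S × P)) : Prop :=
  I.IsMatching M ∧ ∀ (s : S) (p : P), ¬SuperBlocking I M s p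

/-- `M` is a weakly stable matching in `I`. -/
def WeaklyStable (I : SPAST S P L) (M : Finset (S × P)) : Prop :=
  I.IsMatching M ∧ ∀ (s : S) (p : P), ¬WeakBlocking I M s p

/-- `I` is an SPA-S instance: all preference lists are strictly ordered
(the preorders are antisymmetric). -/
def StrictPrefs (I : SPAST S P L) : Prop :=
  (∀ s : S, ∀ p ∈ I.acc s, ∀ q ∈ I.acc s, I.sPref s p q → I.sPref s q p → p = q) ∧
  (∀ k : L, ∀ t t' : S, (∃ p ∈ I.acc t, I.lec p = k) → (∃ p ∈ I.acc t', I.lec p = k) →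
    I.lPref k t t' → I.lPref k t' t → t = t')

/-- `I'` is an SPA-S instance obtained from `I` by breaking the ties. -/
def TieBreaking (I I' : SPAST S P L) : Prop :=
  I'.lec = I.lec ∧ I'.c = I.c ∧ I'.d = I.d ∧ I'.acc = I.acc ∧
  StrictPrefs I' ∧
  (∀ (s : S) (p q : P), I.sPref s p q → ¬I.sPref s q p →
    I'.sPref s p q ∧ ¬I'.sPref s q p) ∧
  (∀ (k : L) (t t' : S), I.lPref k t t' → ¬I.lPref k t' t →
    I'.lPref k t t' ∧ ¬I'.lPref k t' t)

end SPAST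

/-!
Break the ties: a student ranks a project by the number of acceptable projects it strictly
prefers to it, and a lecturer ranks a student likewise, with a fixed enumeration of `S` as
secondary key so that distinct students get distinct ranks. Strict preferences become strict
inequalities of ranks.

Then run student-proposing deferred acceptance: an unmatched student proposes to a best project
left on its list; if the project, or else its lecturer, is now over capacity, the lecturer's
worst-ranked student among those holding it is rejected and deletes the project it held from its
list. Each deletion of `p` from the list of `s` is justified by `p`, or its lecturer, being full
of students ranked strictly before `s`, and this stays true because a full project or lecturer
only trades students for better ones. The potential `∑ |list| + #unmatched` drops at every
proposal. At the end, a weakly blocking pair `(s, p)` would have `p` deleted from the list of `s`,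
and the recorded rejection contradicts each of the three ways in which `(s, p)` can block.
-/

namespace SPAST

theorem card_filter_strictly_better_lt {α : Type*} (R : α → α → Prop) (D : Finset α)
    (hrefl : ∀ x ∈ D, R x x)
    (htrans : ∀ x ∈ D, ∀ y ∈ D, ∀ z ∈ D, R x y → R y z → R x z)
    {x y : α} (hx : x ∈ D) (hy : y ∈ D) (hxy : R x y) (hyx : ¬R y x) :
    (D.filter fun z => R z x ∧ ¬R x z).card < (D.filter fun z => R z y ∧ ¬R y z).card := by
  refine Finset.card_lt_card ⟨fun z hz => ?_, fun hsub => ?_⟩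
  · obtain ⟨hzD, hzx, hxz⟩ := Finset.mem_filter.mp hz
    exact Finset.mem_filter.mpr ⟨hzD, htrans z hzD x hx y hy hzx hxy,
      fun hyz => hxz (htrans x hx y hy z hzD hxy hyz)⟩
  · exact (Finset.mem_filter.mp (hsub (Finset.mem_filter.mpr ⟨hx, hxy, hyx⟩))).2.2 (hrefl x hx)

section Ranks

variable {S P L : Type} [Fintype S] [Fintype P] [Fintype L]
  [DecidableEq S] [DecidableEq P] [DecidableEq L] (I : SPAST S P L)

noncomputable def studentRank (s : S) (p : P) : ℕ :=
  ((I.acc s).filter fun q => I.sPref s q p ∧ ¬I.sPref s p q).card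

theorem studentRank_lt {s : S} {p q : P} (hp : p ∈ I.acc s) (hq : q ∈ I.acc s)
    (hpq : I.sPref s p q) (hqp : ¬I.sPref s q p) : I.studentRank s p < I.studentRank s q :=
  card_filter_strictly_better_lt _ _ (I.sRefl s) (I.sTrans s) hp hq hpq hqp

noncomputable def lecturerRank (k : L) (t : S) : ℕ ×ₗ Fin (Fintype.card S) :=
  toLex (((Finset.univ.filter fun t' => ∃ p ∈ I.acc t', I.lec p = k).filter
    fun t' => I.lPref k t' t ∧ ¬I.lPref k t t').card, Fintype.equivFin S t)

theorem lecturerRank_injective (k : L) : Function.Injective (I.lecturerRank k) := by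
  intro t t' h
  exact (Fintype.equivFin S).injective (Prod.ext_iff.mp (toLex.injective h)).2

theorem lecturerRank_lt {k : L} {t t' : S} (ht : ∃ p ∈ I.acc t, I.lec p = k)
    (ht' : ∃ p ∈ I.acc t', I.lec p = k) (htt' : I.lPref k t t') (ht't : ¬I.lPref k t' t) :
    I.lecturerRank k t < I.lecturerRank k t' := by
  refine Prod.Lex.toLex_lt_toLex.mpr (Or.inl ?_)
  refine card_filter_strictly_better_lt _ _ (fun x hx => I.lRefl k x (Finset.mem_filter.mp hx).2)
    (fun x hx y hy z hz => I.lTrans k x y z (Finset.mem_filter.mp hx).2 (Finset.mem_filter.mp hy).2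
      (Finset.mem_filter.mp hz).2) ?_ ?_ htt' ht't
  · exact Finset.mem_filter.mpr ⟨Finset.mem_univ t, ht⟩
  · exact Finset.mem_filter.mpr ⟨Finset.mem_univ t', ht'⟩

end Ranks

def Functional {S P : Type} (M : Finset (S × P)) : Prop :=
  ∀ s : S, ∀ p q : P, (s, p) ∈ M → (s, q) ∈ M → p = q

theorem Functional.card_le {S P : Type} [Fintype S] {M : Finset (S × P)} (hM : Functional M) :
    M.card ≤ Fintype.card S :=
  Finset.card_le_card_of_injOn Prod.fst (fun _ _ => Finset.mem_coe.mpr (Finset.mem_univ _))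
    fun x hx y hy hxy => Prod.ext hxy (hM x.1 x.2 y.2 hx (hxy ▸ hy))

section ProjectAssignments

variable {S P : Type} [DecidableEq S] [DecidableEq P] {M : Finset (S × P)}

@[simp]
theorem mem_projAsg {p : P} {t : S} : t ∈ projAsg M p ↔ (t, p) ∈ M := by
  simp [projAsg]

theorem notMem_projAsg {u : S} (hu : ∀ p, (u, p) ∉ M) (p : P) : u ∉ projAsg M p :=
  fun h => hu p (mem_projAsg.mp h)

theorem card_projAsg (p : P) : (projAsg M p).card = (M.filter fun x => x.2 = p).card :=
  Finset.card_image_of_injOn fun _ hx _ hy hxy =>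
    Prod.ext hxy ((Finset.mem_filter.mp hx).2.trans (Finset.mem_filter.mp hy).2.symm)

theorem Functional.insert (hM : Functional M) {u : S} (hu : ∀ p, (u, p) ∉ M) (r : P) :
    Functional (insert (u, r) M) := by
  intro s p q hp hq
  simp only [Finset.mem_insert, Prod.mk.injEq] at hp hq
  rcases hp with ⟨rfl, rfl⟩ | hp <;> rcases hq with ⟨hs, rfl⟩ | hq
  exacts [rfl, absurd hq (hu q), absurd hp (hs ▸ hu p), hM s p q hp hq]

theorem Functional.erase (hM : Functional M) (x : S × P) : Functional (M.erase x) :=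
  fun s p q hp hq => hM s p q (Finset.mem_of_mem_erase hp) (Finset.mem_of_mem_erase hq)

theorem projAsg_insert_self (u : S) (r : P) :
    projAsg (insert (u, r) M) r = insert u (projAsg M r) := by
  ext t; simp

theorem projAsg_insert_of_ne {p r : P} (u : S) (h : p ≠ r) :
    projAsg (insert (u, r) M) p = projAsg M p := by
  ext t; simp [h]

theorem Functional.projAsg_erase (hM : Functional M) {w : S} {q : P} (hw : (w, q) ∈ M)
    (p : P) : projAsg (M.erase (w, q)) p = (projAsg M p).erase w := by
  ext t; simp only [mem_projAsg, Finset.mem_erase, ne_eq, Prod.mk.injEq]; grind [Functional]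

end ProjectAssignments

section LecturerAssignments

variable {S P L : Type} [Fintype S] [Fintype P] [Fintype L]
  [DecidableEq S] [DecidableEq P] [DecidableEq L] {I : SPAST S P L} {M : Finset (S × P)}

@[simp]
theorem mem_lecAsg {k : L} {t : S} :
    t ∈ lecAsg I M k ↔ ∃ q, (t, q) ∈ M ∧ I.lec q = k := by
  simp [lecAsg]

theorem notMem_lecAsg {u : S} (hu : ∀ p, (u, p) ∉ M) (k : L) : u ∉ lecAsg I M k := fun h => by
  obtain ⟨p, hp, -⟩ := mem_lecAsg.mp h
  exact hu p hp

theorem projAsg_subset_lecAsg (p : P) : projAsg M p ⊆ lecAsg I M (I.lec p) :=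
  fun _ ht => mem_lecAsg.mpr ⟨p, mem_projAsg.mp ht, rfl⟩

theorem Functional.card_lecAsg (hM : Functional M) (k : L) :
    (lecAsg I M k).card = (M.filter fun x => I.lec x.2 = k).card :=
  Finset.card_image_of_injOn fun x hx y hy hxy =>
    Prod.ext hxy (hM x.1 x.2 y.2 (Finset.mem_filter.mp hx).1 (hxy ▸ (Finset.mem_filter.mp hy).1))

theorem Functional.lec_eq (hM : Functional M) {t : S} {k k' : L} (hk : t ∈ lecAsg I M k)
    (hk' : t ∈ lecAsg I M k') : k = k' := by
  obtain ⟨q, hq, rfl⟩ := mem_lecAsg.mp hk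
  obtain ⟨q', hq', rfl⟩ := mem_lecAsg.mp hk'
  rw [hM t q q' hq hq']

theorem lecAsg_insert_self (u : S) (r : P) :
    lecAsg I (insert (u, r) M) (I.lec r) = insert u (lecAsg I M (I.lec r)) := by
  ext t; simp only [mem_lecAsg, Finset.mem_insert, Prod.mk.injEq]; grind

theorem lecAsg_insert_of_ne {k : L} {r : P} (u : S) (h : I.lec r ≠ k) :
    lecAsg I (insert (u, r) M) k = lecAsg I M k := by
  ext t; simp only [mem_lecAsg, Finset.mem_insert, Prod.mk.injEq]; grind

theorem Functional.lecAsg_erase (hM : Functional M) {w : S} {q : P} (hw : (w, q) ∈ M) (k : L) :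
    lecAsg I (M.erase (w, q)) k = (lecAsg I M k).erase w := by
  ext t; simp only [mem_lecAsg, Finset.mem_erase, ne_eq, Prod.mk.injEq]; grind [Functional]

end LecturerAssignments

section FilledAbove

variable {S β : Type*} [LinearOrder β] {σ : S → β} {T : Finset S} {cap : ℕ} {s : S}

/-- Smaller ranks are better, here and throughout. -/
def FilledAbove (σ : S → β) (T : Finset S) (cap : ℕ) (s : S) : Prop :=
  cap ≤ T.card ∧ ∀ t ∈ T, σ t < σ s

theorem FilledAbove.of_le {s' : S} (h : FilledAbove σ T cap s) (hs : σ s ≤ σ s') :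
    FilledAbove σ T cap s' :=
  ⟨h.1, fun t ht => (h.2 t ht).trans_le hs⟩

theorem FilledAbove.insert_erase [DecidableEq S] {u w : S} (h : FilledAbove σ T cap s)
    (hu : u ∉ T) (hw : w ∈ insert u T) (huw : σ u ≤ σ w) :
    FilledAbove σ ((insert u T).erase w) cap s := by
  refine ⟨by rw [Finset.card_erase_of_mem hw, Finset.card_insert_of_notMem hu]; exact h.1,
    fun t ht => ?_⟩
  obtain ⟨htw, ht⟩ := Finset.mem_erase.mp ht
  rcases Finset.mem_insert.mp ht with rfl | ht
  · rcases Finset.mem_insert.mp hw with rfl | hw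
    exacts [absurd rfl htw, huw.trans_lt (h.2 w hw)]
  · exact h.2 t ht

theorem filledAbove_erase_of_forall_le [DecidableEq S] {w : S} (hσ : Function.Injective σ)
    (hcap : cap < T.card) (hw : w ∈ T) (hmax : ∀ t ∈ T, σ t ≤ σ w) :
    FilledAbove σ (T.erase w) cap w := by
  refine ⟨by rw [Finset.card_erase_of_mem hw]; omega, fun t ht => ?_⟩
  obtain ⟨htw, ht⟩ := Finset.mem_erase.mp ht
  exact (hmax t ht).lt_of_ne fun h => htw (hσ h)

end FilledAbove

section Potential

variable {S P : Type} [Fintype S] [DecidableEq S] [DecidableEq P] {M : Finset (S × P)}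
  {A : S → Finset P} {u w : S} {r q : P}

def potential (M : Finset (S × P)) (A : S → Finset P) : ℕ :=
  ∑ s, (A s).card + (Fintype.card S - M.card)

theorem potential_insert_lt (hM : Functional (insert (u, r) M)) (hu : (u, r) ∉ M) :
    potential (insert (u, r) M) A < potential M A := by
  have := hM.card_le
  rw [Finset.card_insert_of_notMem hu] at this
  unfold potential
  rw [Finset.card_insert_of_notMem hu]
  omega

theorem potential_erase_update_lt (hu : (u, r) ∉ M) (hwq : (w, q) ∈ insert (u, r) M)
    (hq : q ∈ A w) :
    potential ((insert (u, r) M).erase (w, q)) (Function.update A w ((A w).erase q)) <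
      potential M A := by
  have hcard : ((insert (u, r) M).erase (w, q)).card = M.card := by
    rw [Finset.card_erase_of_mem hwq, Finset.card_insert_of_notMem hu, Nat.add_sub_cancel]
  have hsum : ∑ s, (Function.update A w ((A w).erase q) s).card < ∑ s, (A s).card := by
    refine Finset.sum_lt_sum (fun s _ => ?_) ⟨w, Finset.mem_univ w, ?_⟩
    · rcases eq_or_ne s w with rfl | hs
      · simpa using Finset.card_erase_le
      · simp [hs]
    · simpa using Finset.card_erase_lt_of_mem hq
  unfold potential
  omega

end Potential

section DeferredAcceptance

variable {S P L : Type} [Fintype S] [Fintype P] [Fintype L]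
  [DecidableEq S] [DecidableEq P] [DecidableEq L] (I : SPAST S P L)
  {α β : Type*} [LinearOrder α] [LinearOrder β] (ρ : S → P → α) (σ : L → S → β)

def Rejected (M : Finset (S × P)) (s : S) (p : P) : Prop :=
  FilledAbove (σ (I.lec p)) (projAsg M p) (I.c p) s ∨
    FilledAbove (σ (I.lec p)) (lecAsg I M (I.lec p)) (I.d (I.lec p)) s

structure HoldsBest (M : Finset (S × P)) (A : S → Finset P) : Prop where
  functional : Functional M
  subset_acc : ∀ s, A s ⊆ I.acc s
  mem_of_mem : ∀ ⦃s p⦄, (s, p) ∈ M → p ∈ A s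
  le_of_mem : ∀ ⦃s p⦄, (s, p) ∈ M → ∀ q ∈ A s, ρ s p ≤ ρ s q

/-- The invariant of student-proposing deferred acceptance: `A s` is what is left of the list
of `s`, and every project deleted from it has rejected `s` for a reason that is still valid. -/
structure Invariant (M : Finset (S × P)) (A : S → Finset P) : Prop
    extends HoldsBest I ρ M A where
  card_projAsg_le : ∀ p, (projAsg M p).card ≤ I.c p
  card_lecAsg_le : ∀ k, (lecAsg I M k).card ≤ I.d k
  rejected : ∀ ⦃s p⦄, p ∈ I.acc s → p ∉ A s → Rejected I σ M s p

/-- After `r` has accepted a proposal in `M`, the students of `X` compete for a place: `X` is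
`M(r)` if `r` is over capacity, and `M(l(r))` if only the lecturer `l(r)` is. -/
def OverfullSet (M : Finset (S × P)) (r : P) (X : Finset S) : Prop :=
  (X = projAsg M r ∧ I.c r < X.card) ∨
    (X = lecAsg I M (I.lec r) ∧ I.d (I.lec r) < X.card ∧ (projAsg M r).card ≤ I.c r)

variable {I ρ σ} {M : Finset (S × P)} {A : S → Finset P} {u w : S} {r q : P} {X : Finset S}

theorem invariant_empty : Invariant I ρ σ ∅ I.acc where
  functional := by simp [Functional]
  subset_acc _ := subset_rfl
  mem_of_mem := by simp
  le_of_mem := by simp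
  card_projAsg_le _ := by simp [projAsg]
  card_lecAsg_le _ := by simp [lecAsg]
  rejected _ _ hp hp' := absurd hp hp'

theorem HoldsBest.insert (h : HoldsBest I ρ M A) (hu : ∀ p, (u, p) ∉ M) (hr : r ∈ A u)
    (hmin : ∀ q ∈ A u, ρ u r ≤ ρ u q) : HoldsBest I ρ (insert (u, r) M) A where
  functional := h.functional.insert hu r
  subset_acc := h.subset_acc
  mem_of_mem s p hsp := by
    rcases Finset.mem_insert.mp hsp with hsp | hsp
    · cases hsp; exact hr
    · exact h.mem_of_mem hsp
  le_of_mem s p hsp := by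
    rcases Finset.mem_insert.mp hsp with hsp | hsp
    · cases hsp; exact hmin
    · exact h.le_of_mem hsp

theorem HoldsBest.erase_update (h : HoldsBest I ρ M A) (hwq : (w, q) ∈ M) :
    HoldsBest I ρ (M.erase (w, q)) (Function.update A w ((A w).erase q)) := by
  have hne : ∀ ⦃s p⦄, (s, p) ∈ M.erase (w, q) → s ≠ w := by
    rintro s p hsp rfl
    obtain ⟨hne, hsp⟩ := Finset.mem_erase.mp hsp
    exact hne (by rw [h.functional s p q hsp hwq])
  refine ⟨h.functional.erase _, fun s => ?_, fun s p hsp => ?_, fun s p hsp => ?_⟩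
  · rcases eq_or_ne s w with rfl | hs
    · simpa using (Finset.erase_subset _ _).trans (h.subset_acc s)
    · simpa [hs] using h.subset_acc s
  · simpa [hne hsp] using h.mem_of_mem (Finset.mem_of_mem_erase hsp)
  · simpa [hne hsp] using h.le_of_mem (Finset.mem_of_mem_erase hsp)

theorem Invariant.accept (h : Invariant I ρ σ M A) (hu : ∀ p, (u, p) ∉ M) (hr : r ∈ A u)
    (hmin : ∀ q ∈ A u, ρ u r ≤ ρ u q) (hc : (projAsg M r).card < I.c r)
    (hd : (lecAsg I M (I.lec r)).card < I.d (I.lec r)) :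
    Invariant I ρ σ (insert (u, r) M) A where
  toHoldsBest := h.insert hu hr hmin
  card_projAsg_le p := by
    rcases eq_or_ne p r with rfl | hp
    · rw [projAsg_insert_self]; exact (Finset.card_insert_le _ _).trans hc
    · rw [projAsg_insert_of_ne u hp]; exact h.card_projAsg_le p
  card_lecAsg_le k := by
    rcases eq_or_ne (I.lec r) k with rfl | hk
    · rw [lecAsg_insert_self]; exact (Finset.card_insert_le _ _).trans hd
    · rw [lecAsg_insert_of_ne u hk]; exact h.card_lecAsg_le k
  rejected s p hp hpA := by
    rcases h.rejected hp hpA with hfull | hfull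
    · rcases eq_or_ne p r with rfl | hpr
      · exact absurd hfull.1 hc.not_ge
      · left; rwa [projAsg_insert_of_ne u hpr]
    · rcases eq_or_ne (I.lec r) (I.lec p) with hk | hk
      · rw [← hk] at hfull; exact absurd hfull.1 hd.not_ge
      · right; rwa [lecAsg_insert_of_ne u hk]

theorem OverfullSet.subset_lecAsg (hX : OverfullSet I M r X) : X ⊆ lecAsg I M (I.lec r) := by
  rcases hX with ⟨rfl, -⟩ | ⟨rfl, -⟩
  exacts [projAsg_subset_lecAsg r, subset_rfl]

theorem OverfullSet.rejected (hX : OverfullSet I M r X) (hM : Functional M)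
    (hσ : Function.Injective (σ (I.lec r))) (hwX : w ∈ X)
    (hmax : ∀ t ∈ X, σ (I.lec r) t ≤ σ (I.lec r) w) (hwq : (w, q) ∈ M) :
    Rejected I σ (M.erase (w, q)) w q := by
  rcases hX with ⟨rfl, hc⟩ | ⟨rfl, hd, -⟩
  · obtain rfl : r = q := hM w r q (mem_projAsg.mp hwX) hwq
    left
    rw [hM.projAsg_erase hwq]
    exact filledAbove_erase_of_forall_le hσ hc hwX hmax
  · have hk : I.lec r = I.lec q := hM.lec_eq hwX (mem_lecAsg.mpr ⟨q, hwq, rfl⟩)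
    right
    rw [hM.lecAsg_erase hwq, ← hk]
    exact filledAbove_erase_of_forall_le hσ hd hwX hmax

theorem FilledAbove.lecAsg_insert_erase (hM : Functional (insert (u, r) M))
    (hu : ∀ p, (u, p) ∉ M)
    (hwk : w ∈ lecAsg I (insert (u, r) M) (I.lec r)) (hwq : (w, q) ∈ insert (u, r) M)
    (huw : σ (I.lec r) u ≤ σ (I.lec r) w) {k : L} {s : S}
    (h : FilledAbove (σ k) (lecAsg I M k) (I.d k) s) :
    FilledAbove (σ k) (lecAsg I ((insert (u, r) M).erase (w, q)) k) (I.d k) s := by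
  rw [hM.lecAsg_erase hwq]
  rcases eq_or_ne (I.lec r) k with rfl | hk
  · rw [lecAsg_insert_self] at hwk ⊢
    exact h.insert_erase (notMem_lecAsg hu _) hwk huw
  · have hwk' : w ∉ lecAsg I M k := fun hwk' =>
      hk (hM.lec_eq hwk (by rw [lecAsg_insert_of_ne u hk]; exact hwk'))
    rwa [lecAsg_insert_of_ne u hk, Finset.erase_eq_of_notMem hwk']

theorem OverfullSet.rejected_of_filledAbove_projAsg (hX : OverfullSet I (insert (u, r) M) r X)
    (hM : Functional (insert (u, r) M)) (hu : ∀ p, (u, p) ∉ M)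
    (hσ : Function.Injective (σ (I.lec r))) (huX : u ∈ X) (hwX : w ∈ X)
    (hmax : ∀ t ∈ X, σ (I.lec r) t ≤ σ (I.lec r) w) (hwq : (w, q) ∈ insert (u, r) M)
    {s : S} {p : P} (h : FilledAbove (σ (I.lec p)) (projAsg M p) (I.c p) s) :
    Rejected I σ ((insert (u, r) M).erase (w, q)) s p := by
  rcases eq_or_ne p r with rfl | hpr
  · have hX' : X = projAsg (insert (u, p) M) p := by
      rcases hX with ⟨hX, -⟩ | ⟨-, -, hc⟩
      · exact hX
      · rw [projAsg_insert_self, Finset.card_insert_of_notMem (notMem_projAsg hu p)] at hc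
        exact absurd h.1 (by omega)
    left
    rw [hM.projAsg_erase hwq, projAsg_insert_self]
    rw [hX', projAsg_insert_self] at hwX
    exact h.insert_erase (notMem_projAsg hu p) hwX (hmax u huX)
  · by_cases hwp : w ∈ projAsg M p
    · have hwp' : (w, p) ∈ insert (u, r) M := Finset.mem_insert_of_mem (mem_projAsg.mp hwp)
      rcases hX with ⟨rfl, -⟩ | ⟨rfl, hd, -⟩
      · exact absurd (hM w p r hwp' (mem_projAsg.mp hwX)) hpr
      have hk : I.lec r = I.lec p := hM.lec_eq hwX (mem_lecAsg.mpr ⟨p, hwp', rfl⟩)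
      right
      rw [hM.lecAsg_erase hwq, ← hk]
      rw [← hk] at h
      exact (filledAbove_erase_of_forall_le hσ hd hwX hmax).of_le (h.2 w hwp).le
    · left
      rwa [hM.projAsg_erase hwq, projAsg_insert_of_ne u hpr, Finset.erase_eq_of_notMem hwp]

theorem OverfullSet.mem_of_insert (hX : OverfullSet I (insert (u, r) M) r X) : u ∈ X := by
  rcases hX with ⟨rfl, -⟩ | ⟨rfl, -⟩ <;> simp

theorem Invariant.evict (h : Invariant I ρ σ M A) (hu : ∀ p, (u, p) ∉ M) (hr : r ∈ A u)
    (hmin : ∀ q ∈ A u, ρ u r ≤ ρ u q) (hX : OverfullSet I (insert (u, r) M) r X)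
    (hσ : Function.Injective (σ (I.lec r))) (hwX : w ∈ X)
    (hmax : ∀ t ∈ X, σ (I.lec r) t ≤ σ (I.lec r) w) (hwq : (w, q) ∈ insert (u, r) M) :
    Invariant I ρ σ ((insert (u, r) M).erase (w, q)) (Function.update A w ((A w).erase q)) := by
  have hM := h.functional.insert hu r
  have huX := hX.mem_of_insert
  refine ⟨(h.insert hu hr hmin).erase_update hwq, fun p => ?_, fun k => ?_,
    fun s p hp hpA => ?_⟩
  · rw [hM.projAsg_erase hwq]
    rcases eq_or_ne p r with rfl | hpr
    · rcases hX with ⟨rfl, -⟩ | ⟨-, -, hc⟩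
      · have := Finset.card_insert_le u (projAsg M p)
        have := h.card_projAsg_le p
        rw [Finset.card_erase_of_mem hwX, projAsg_insert_self]
        omega
      · exact Finset.card_erase_le.trans hc
    · rw [projAsg_insert_of_ne u hpr]
      exact Finset.card_erase_le.trans (h.card_projAsg_le p)
  · rw [hM.lecAsg_erase hwq]
    rcases eq_or_ne (I.lec r) k with rfl | hk
    · have := Finset.card_insert_le u (lecAsg I M (I.lec r))
      have := h.card_lecAsg_le (I.lec r)
      rw [Finset.card_erase_of_mem (hX.subset_lecAsg hwX), lecAsg_insert_self]
      omega
    · rw [lecAsg_insert_of_ne u hk]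
      exact Finset.card_erase_le.trans (h.card_lecAsg_le k)
  · by_cases hsp : s = w ∧ p = q
    · obtain ⟨rfl, rfl⟩ := hsp
      exact hX.rejected hM hσ hwX hmax hwq
    have hpA' : p ∉ A s := by
      rcases eq_or_ne s w with rfl | hs
      · simp only [Function.update_self, Finset.mem_erase, not_and] at hpA
        exact hpA fun hpq => hsp ⟨rfl, hpq⟩
      · simpa [Function.update_of_ne hs] using hpA
    rcases h.rejected hp hpA' with hfull | hfull
    · exact hX.rejected_of_filledAbove_projAsg hM hu hσ huX hwX hmax hwq hfull
    · exact Or.inr (hfull.lecAsg_insert_erase hM hu (hX.subset_lecAsg hwX) hwq (hmax u huX))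

theorem Invariant.exists_potential_lt (h : Invariant I ρ σ M A)
    (hσ : ∀ k, Function.Injective (σ k)) (hu : ∀ p, (u, p) ∉ M) (hA : (A u).Nonempty) :
    ∃ M' A', Invariant I ρ σ M' A' ∧ potential M' A' < potential M A := by
  obtain ⟨r, hr, hmin⟩ := Finset.exists_min_image (A u) (ρ u) hA
  by_cases hover : I.c r < (projAsg (insert (u, r) M) r).card ∨
      I.d (I.lec r) < (lecAsg I (insert (u, r) M) (I.lec r)).card
  · obtain ⟨X, hX⟩ : ∃ X, OverfullSet I (insert (u, r) M) r X := by
      by_cases hc : I.c r < (projAsg (insert (u, r) M) r).card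
      · exact ⟨_, Or.inl ⟨rfl, hc⟩⟩
      · exact ⟨_, Or.inr ⟨rfl, hover.resolve_left hc, not_lt.mp hc⟩⟩
    obtain ⟨w, hwX, hmax⟩ := Finset.exists_max_image X (σ (I.lec r)) ⟨u, hX.mem_of_insert⟩
    obtain ⟨q, hwq, -⟩ := mem_lecAsg.mp (hX.subset_lecAsg hwX)
    exact ⟨_, _, h.evict hu hr hmin hX (hσ _) hwX hmax hwq,
      potential_erase_update_lt (hu r) hwq ((h.insert hu hr hmin).mem_of_mem hwq)⟩
  · obtain ⟨hc, hd⟩ := not_or.mp hover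
    rw [projAsg_insert_self, Finset.card_insert_of_notMem (notMem_projAsg hu r)] at hc
    rw [lecAsg_insert_self, Finset.card_insert_of_notMem (notMem_lecAsg hu _)] at hd
    exact ⟨_, _, h.accept hu hr hmin (by omega) (by omega),
      potential_insert_lt (h.functional.insert hu r) (hu r)⟩

theorem Invariant.isMatching (h : Invariant I ρ σ M A) : I.IsMatching M :=
  ⟨fun x hx => h.subset_acc x.1 (h.mem_of_mem hx), h.functional,
    fun p => card_projAsg (M := M) p ▸ h.card_projAsg_le p,
    fun k => h.functional.card_lecAsg k ▸ h.card_lecAsg_le k⟩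

theorem Invariant.not_weakBlocking (h : Invariant I ρ σ M A)
    (hterm : ∀ s, (∀ p, (s, p) ∉ M) → A s = ∅)
    (hρ : ∀ s p q, p ∈ I.acc s → q ∈ I.acc s → I.sPref s p q → ¬I.sPref s q p →
      ρ s p < ρ s q)
    (hσ : ∀ k t t', (∃ p ∈ I.acc t, I.lec p = k) → (∃ p ∈ I.acc t', I.lec p = k) →
      I.lPref k t t' → ¬I.lPref k t' t → σ k t < σ k t')
    (s : S) (p : P) : ¬WeakBlocking I M s p := by
  rintro ⟨hp, -, hpref, hcap⟩
  have hpA : p ∉ A s := by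
    intro hpA
    obtain ⟨q, hq⟩ : ∃ q, (s, q) ∈ M := by
      by_contra! hs
      exact Finset.notMem_empty p (hterm s hs ▸ hpA)
    obtain ⟨hpq, hqp⟩ := hpref q hq
    exact (hρ s p q hp (h.subset_acc s (h.mem_of_mem hq)) hpq hqp).not_ge (h.le_of_mem hq p hpA)
  have hbetter : ∀ t ∈ lecAsg I M (I.lec p),
      I.lPref (I.lec p) s t → ¬I.lPref (I.lec p) t s → σ (I.lec p) s < σ (I.lec p) t :=
    fun t ht => by
    obtain ⟨q, hq, hk⟩ := mem_lecAsg.mp ht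
    exact hσ _ s t ⟨p, hp, rfl⟩ ⟨q, h.subset_acc t (h.mem_of_mem hq), hk⟩
  rcases h.rejected hp hpA with ⟨hc, hall⟩ | ⟨hd, hall⟩
  · rcases hcap with ⟨hc', -⟩ | ⟨hc', -⟩ | ⟨-, t, ⟨ht, -⟩, hst, hts⟩
    · omega
    · omega
    · exact lt_asymm (hall t ht) (hbetter t (projAsg_subset_lecAsg p ht) hst hts)
  · rcases hcap with
      ⟨-, hd'⟩ | ⟨-, -, hs | ⟨t, ⟨ht, -⟩, hst, hts⟩⟩ | ⟨-, t, ⟨ht, -⟩, hst, hts⟩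
    · omega
    · exact lt_irrefl _ (hall s hs)
    · exact lt_asymm (hall t ht) (hbetter t ht hst hts)
    · have ht' : t ∈ lecAsg I M (I.lec p) := projAsg_subset_lecAsg p ht
      exact lt_asymm (hall t ht') (hbetter t ht' hst hts)

variable (I ρ σ) in
theorem exists_invariant_terminal (hσ : ∀ k, Function.Injective (σ k)) :
    ∃ M A, Invariant I ρ σ M A ∧ ∀ s, (∀ p, (s, p) ∉ M) → A s = ∅ := by
  obtain ⟨⟨M, A⟩, hinv, hmin⟩ :=
    (measure fun x : Finset (S × P) × (S → Finset P) => potential x.1 x.2).wf.has_min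
      {x | Invariant I ρ σ x.1 x.2} ⟨((∅ : Finset (S × P)), I.acc), invariant_empty⟩
  refine ⟨M, A, hinv, fun u hu => Finset.not_nonempty_iff_eq_empty.mp fun hA => ?_⟩
  obtain ⟨M', A', hinv', hlt⟩ := hinv.exists_potential_lt hσ hu hA
  exact hmin (M', A') hinv' hlt

end DeferredAcceptance

end SPAST

open SPAST in
theorem exists_weakly_stable {S P L : Type} [Fintype S] [Fintype P] [Fintype L]
    [DecidableEq S] [DecidableEq P] [DecidableEq L]
    (I : SPAST S P L) :
    ∃ M : Finset (S × P), WeaklyStable I M := by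
  obtain ⟨M, A, h, hterm⟩ :=
    exists_invariant_terminal I I.studentRank I.lecturerRank I.lecturerRank_injective
  exact ⟨M, h.isMatching, h.not_weakBlocking hterm (fun _ _ _ => I.studentRank_lt)
    (fun _ _ _ => I.lecturerRank_lt)⟩
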